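/- arXiv:1308.6100 — 5 statements merged into one kernel-verified Lean document; each statement's English description precedes it below -/
import Mathlib

section
/- Let α, γ, μ > 0. Define G on [0, ∞) as the unique solution of the linear ODE g(t)·(α/(γμ²) + 1/μ) = 1 − G(t) with initial condition G(0) = 1/(1 + α/(γμ)), where g = G'. Then G(t) = 1 − (1/(1 + γμ/α)) · exp(−μt/(1 + α/(γμ))) and in particular G is increasing with lim_{t→∞} G(t) = 1. -/
/-!
Dividing the ODE by its coefficient gives `G' = k (1 - G)` with `k = μ / (1 + α / (γ μ))`.
Then `(1 - G t) e^{k t}` has derivative zero, so `1 - G` decays exponentially from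
`1 - G 0 = 1 / (1 + γ μ / α)`.
-/

open Real Filter Set

theorem eq_sub_mul_exp_of_hasDerivAt {k c : ℝ} {f : ℝ → ℝ}
    (hf : ∀ t ≥ (0:ℝ), HasDerivAt f (k * (c - f t)) t) {t : ℝ} (ht : 0 ≤ t) :
    f t = c - (c - f 0) * exp (-(k * t)) := by
  set F : ℝ → ℝ := fun s => (c - f s) * exp (k * s)
  have hF : ∀ s ≥ (0:ℝ), HasDerivAt F 0 s := by
    intro s hs
    have hexp : HasDerivAt (fun s => exp (k * s)) (exp (k * s) * k) s :=
      ((hasDerivAt_id s).const_mul k).exp.congr_deriv (by simp)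
    exact (((hf s hs).const_sub c).mul hexp).congr_deriv (by ring)
  have hconst : F t = F 0 :=
    constant_of_has_deriv_right_zero (fun s hs => (hF s hs.1).continuousAt.continuousWithinAt)
      (fun s hs => (hF s hs.1).hasDerivWithinAt) t ⟨ht, le_rfl⟩
  simp only [F, mul_zero, exp_zero, mul_one] at hconst
  rw [← hconst, exp_neg, mul_assoc, mul_inv_cancel₀ (exp_pos _).ne']
  ring

theorem strictMono_sub_mul_exp_neg {k A : ℝ} (hk : 0 < k) (hA : 0 < A) (c : ℝ) :
    StrictMono fun t => c - A * exp (-(k * t)) := fun a b hab => by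
  have : exp (-(k * b)) < exp (-(k * a)) := exp_lt_exp.mpr (by nlinarith)
  dsimp only
  nlinarith

theorem tendsto_sub_mul_exp_neg {k : ℝ} (hk : 0 < k) (A c : ℝ) :
    Tendsto (fun t => c - A * exp (-(k * t))) atTop (nhds c) := by
  have hexp : Tendsto (fun t => exp (-(k * t))) atTop (nhds 0) :=
    tendsto_exp_atBot.comp (tendsto_neg_atTop_atBot.comp (tendsto_id.const_mul_atTop hk))
  simpa using (hexp.const_mul A).const_sub c

theorem stmt_2 (α γ μ : ℝ) (hα : 0 < α) (hγ : 0 < γ) (hμ : 0 < μ)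
    (G g : ℝ → ℝ)
    (hderiv : ∀ t ≥ (0:ℝ), HasDerivAt G (g t) t)
    (hODE : ∀ t ≥ (0:ℝ), g t * (α/(γ*μ^2) + 1/μ) = 1 - G t)
    (hG0 : G 0 = 1 / (1 + α/(γ*μ))) :
    (∀ t ≥ (0:ℝ), G t = 1 - (1/(1 + γ*μ/α)) * Real.exp (-(μ*t)/(1 + α/(γ*μ))))
      ∧ StrictMonoOn G (Set.Ici 0)
      ∧ Tendsto G atTop (nhds 1) := by
  set k := μ / (1 + α / (γ * μ))
  set A := 1 / (1 + γ * μ / α)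
  have hk : 0 < k := by positivity
  have hA : 0 < A := by positivity
  have hG' : ∀ t ≥ (0:ℝ), HasDerivAt G (k * (1 - G t)) t := fun t ht => by
    convert hderiv t ht using 1
    rw [← hODE t ht]
    simp only [k]
    field_simp
    ring
  have h1G0 : 1 - G 0 = A := by
    rw [hG0]
    simp only [A]
    field_simp
    ring
  have hG : ∀ t ≥ (0:ℝ), G t = 1 - A * exp (-(k * t)) := fun t ht => by
    rw [eq_sub_mul_exp_of_hasDerivAt hG' ht, h1G0]
  refine ⟨fun t ht => by rw [hG t ht, mul_comm, div_mul_eq_mul_div, neg_div, mul_comm], ?_, ?_⟩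
  · exact ((strictMono_sub_mul_exp_neg hk hA 1).strictMonoOn _).congr fun t ht => (hG t ht).symm
  · exact (tendsto_sub_mul_exp_neg hk A 1).congr' <|
      (eventually_ge_atTop 0).mono fun t ht => (hG t ht).symm
end

section
/- Let α, γ, μ, T > 0 and define t_a(T) = −(γ/α)·(1 − exp(−μT/(1 + α/(γμ)))/(1 + γμ/α))^{-1}. Then t_a(T) < −γ/α for all T, t_a(T) is strictly increasing in T, and lim_{T→∞} t_a(T) = −γ/α. Consequently the equilibrium cost −α·t_a(T) is strictly decreasing in T and converges to γ as T → ∞. -/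
/-! Write `t_a(T) = -(γ/α) · g(T)⁻¹` with `g(T) = 1 - exp (-k T) / d`, where
`k = μ / (1 + α/(γμ))` and `d = 1 + γμ/α ≥ 1`. Everything follows from `g` taking values in
`(0, 1)` for `T > 0`, increasing strictly and tending to `1`. -/

open Real Filter Set Topology

section ExpFactor

variable {k d : ℝ}

lemma strictMono_one_sub_exp_neg_mul_div (hk : 0 < k) (hd : 0 < d) :
    StrictMono fun T => 1 - exp (-(k * T)) / d := by
  intro x y hxy
  have : exp (-(k * y)) < exp (-(k * x)) := exp_lt_exp.mpr (by nlinarith)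
  simp only
  gcongr

lemma one_sub_exp_neg_mul_div_mem_Ioo (hk : 0 < k) (hd : 1 ≤ d) {T : ℝ} (hT : 0 < T) :
    1 - exp (-(k * T)) / d ∈ Ioo 0 1 := by
  have hexp : exp (-(k * T)) < 1 := exp_lt_one_iff.mpr (by nlinarith)
  have hd' : 0 < d := by linarith
  constructor
  · have : exp (-(k * T)) / d < 1 := (div_lt_one hd').mpr (by linarith)
    linarith
  · have : 0 < exp (-(k * T)) / d := by positivity
    linarith

lemma tendsto_one_sub_exp_neg_mul_div (hk : 0 < k) :
    Tendsto (fun T => 1 - exp (-(k * T)) / d) atTop (𝓝 1) := by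
  have hexp : Tendsto (fun T => exp (-(k * T))) atTop (𝓝 0) :=
    tendsto_exp_neg_atTop_nhds_zero.comp (tendsto_id.const_mul_atTop hk)
  simpa using (hexp.div_const d).const_sub 1

variable {c : ℝ}

lemma neg_mul_inv_one_sub_exp_neg_mul_div_lt (hc : 0 < c) (hk : 0 < k) (hd : 1 ≤ d) {T : ℝ}
    (hT : 0 < T) : -c * (1 - exp (-(k * T)) / d)⁻¹ < -c := by
  obtain ⟨hpos, hlt⟩ := one_sub_exp_neg_mul_div_mem_Ioo hk hd hT
  have : 1 < (1 - exp (-(k * T)) / d)⁻¹ := (one_lt_inv₀ hpos).mpr hlt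
  nlinarith

lemma strictMonoOn_neg_mul_inv_one_sub_exp_neg_mul_div (hc : 0 < c) (hk : 0 < k) (hd : 1 ≤ d) :
    StrictMonoOn (fun T => -c * (1 - exp (-(k * T)) / d)⁻¹) (Ioi 0) := by
  intro x hx y _ hxy
  have hinv : (1 - exp (-(k * y)) / d)⁻¹ < (1 - exp (-(k * x)) / d)⁻¹ :=
    inv_strictAnti₀ (one_sub_exp_neg_mul_div_mem_Ioo hk hd hx).1
      (strictMono_one_sub_exp_neg_mul_div hk (by linarith) hxy)
  simp only
  nlinarith

lemma tendsto_neg_mul_inv_one_sub_exp_neg_mul_div (hk : 0 < k) :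
    Tendsto (fun T => -c * (1 - exp (-(k * T)) / d)⁻¹) atTop (𝓝 (-c)) := by
  simpa using ((tendsto_one_sub_exp_neg_mul_div (d := d) hk).inv₀ one_ne_zero).const_mul (-c)

end ExpFactor

theorem stmt_5 (α γ μ : ℝ) (hα : 0 < α) (hγ : 0 < γ) (hμ : 0 < μ)
    (ta : ℝ → ℝ)
    (hta : ∀ T : ℝ, ta T =
      -(γ/α) * (1 - Real.exp (-(μ*T)/(1 + α/(γ*μ))) / (1 + γ*μ/α))⁻¹) :
    (∀ T > (0:ℝ), ta T < -(γ/α))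
      ∧ StrictMonoOn ta (Set.Ioi 0)
      ∧ Tendsto ta atTop (nhds (-(γ/α)))
      ∧ StrictAntiOn (fun T => -α * ta T) (Set.Ioi 0)
      ∧ Tendsto (fun T => -α * ta T) atTop (nhds γ) := by
  set k := μ / (1 + α / (γ * μ))
  have hk : 0 < k := by positivity
  have hd : 1 ≤ 1 + γ * μ / α := le_add_of_nonneg_right (by positivity)
  have hc : 0 < γ / α := by positivity
  have hta' : ta = fun T => -(γ / α) * (1 - exp (-(k * T)) / (1 + γ * μ / α))⁻¹ := by
    funext T
    rw [hta, neg_div, mul_div_right_comm]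
  have hmono : StrictMonoOn ta (Ioi 0) :=
    hta' ▸ strictMonoOn_neg_mul_inv_one_sub_exp_neg_mul_div hc hk hd
  have hlim : Tendsto ta atTop (𝓝 (-(γ / α))) :=
    hta' ▸ tendsto_neg_mul_inv_one_sub_exp_neg_mul_div hk
  refine ⟨fun T hT => hta' ▸ neg_mul_inv_one_sub_exp_neg_mul_div_lt hc hk hd hT, hmono, hlim,
    fun x hx y hy hxy => by nlinarith [hmono hx hy hxy], ?_⟩
  convert hlim.const_mul (-α) using 2
  field_simp
end

section
/- Let α, γ, μ, T > 0 with (α/μ)·(1 − 2e^{−μT}) > γ. Define t^e = −(1/μ)·log((1/2)(1 − γμ/α)) and p₀ = 2 / (1 + α/(γμ) − (α/(γμ) − 1)·exp(−(μ/(1 + α/(γμ)))·(T − t^e))). Then 0 < t^e < T and 0 < p₀ < 1. -/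
/-! With `x = γμ/α`, the hypothesis says `e^{-μT} < (1 - x)/2 < 1/2`, so `log ((1 - x)/2)` lies in
`(-μT, 0)` and `t^e ∈ (0, T)`. For `p₀`, `r = α/(γμ) = 1/x > 1` and the exponential is `E < 1`,
so the denominator `1 + r - (r - 1)E` exceeds `2`. -/

open Real

lemma neg_one_div_mul_log_mem_Ioo {μ T c : ℝ} (hμ : 0 < μ) (hlow : exp (-μ * T) < c)
    (hc : c < 1) : 0 < -(1 / μ) * log c ∧ -(1 / μ) * log c < T := by
  have hc₀ : 0 < c := (exp_pos _).trans hlow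
  have hlog_neg : log c < 0 := log_neg hc₀ hc
  have hlog_gt : -μ * T < log c := by simpa using log_lt_log (exp_pos _) hlow
  rw [neg_mul, one_div_mul_eq_div, neg_lt, lt_neg, neg_zero, div_lt_iff₀ hμ, lt_div_iff₀ hμ]
  constructor <;> linarith

lemma two_div_one_add_sub_mul_mem_Ioo {r E : ℝ} (hr : 1 < r) (hE : E < 1) :
    0 < 2 / (1 + r - (r - 1) * E) ∧ 2 / (1 + r - (r - 1) * E) < 1 := by
  have hD : 2 < 1 + r - (r - 1) * E := by nlinarith
  exact ⟨by positivity, (div_lt_one (by linarith)).2 hD⟩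

theorem stmt_7_general (α γ μ T : ℝ) (hα : 0 < α) (hγ : 0 < γ) (hμ : 0 < μ)
    (hcond : (α/μ) * (1 - 2 * Real.exp (-μ*T)) > γ)
    (te p₀ : ℝ)
    (hte : te = -(1/μ) * Real.log ((1/2) * (1 - γ*μ/α)))
    (hp₀ : p₀ = 2 / (1 + α/(γ*μ) - (α/(γ*μ) - 1) *
      Real.exp (-(μ/(1 + α/(γ*μ))) * (T - te)))) :
    (0 < te ∧ te < T) ∧ (0 < p₀ ∧ p₀ < 1) := by
  have hx : γ * μ / α < 1 - 2 * exp (-μ * T) := by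
    rwa [gt_iff_lt, div_mul_eq_mul_div, lt_div_iff₀ hμ, ← div_lt_iff₀' hα] at hcond
  have hx₀ : 0 < γ * μ / α := by positivity
  have hteIoo : 0 < te ∧ te < T := by
    rw [hte]
    exact neg_one_div_mul_log_mem_Ioo hμ (by linarith) (by linarith)
  have hr : 1 < α / (γ * μ) := by
    rw [one_lt_div (by positivity), ← div_lt_one hα]
    linarith [exp_pos (-μ * T)]
  have hE : exp (-(μ / (1 + α / (γ * μ))) * (T - te)) < 1 :=
    exp_lt_one_iff.2 (mul_neg_of_neg_of_pos (neg_neg_of_pos (by positivity)) (by linarith))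
  exact ⟨hteIoo, hp₀ ▸ two_div_one_add_sub_mul_mem_Ioo hr hE⟩

theorem stmt_7 (α γ μ T : ℝ) (hα : 0 < α) (hγ : 0 < γ) (hμ : 0 < μ) (hT : 0 < T)
    (hcond : (α/μ) * (1 - 2 * Real.exp (-μ*T)) > γ)
    (te p₀ : ℝ)
    (hte : te = -(1/μ) * Real.log ((1/2) * (1 - γ*μ/α)))
    (hp₀ : p₀ = 2 / (1 + α/(γ*μ) - (α/(γ*μ) - 1) *
      Real.exp (-(μ/(1 + α/(γ*μ))) * (T - te)))) :
    (0 < te ∧ te < T) ∧ (0 < p₀ ∧ p₀ < 1) :=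
  stmt_7_general α γ μ T hα hγ hμ hcond te p₀ hte hp₀
end

section
/- Let N ≥ 1, α, γ, μ > 0 with α/μ > γ, and set p₀ = γ/(γ + α/μ). Then the equation (N p₀/2)(γ + α/μ) = N p₀ γ + (α/μ)·q_{p₀}(t) has a unique solution t = t_e in (0, ∞), where q_p(t) is the expected queue size function defined by q_p(t) = Σ_{j=0}^{N} C(N,j) p^j (1−p)^{N−j} Σ_{i=0}^{j} (j−i) e^{−μt}(μt)^i/i!. -/
/-
Write `P_i(x) = e^{-x} x^i / i!` for the Poisson weights. The expected number of the `j` customers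
still waiting after `x` units of service, `Σ_{i ≤ j} (j - i) P_i(x)`, has derivative
`-Σ_{i < j} P_i(x)`, because `P_i' = P_{i-1} - P_i` telescopes. Hence `q_{p₀}` is strictly
decreasing on `[0, ∞)`, from the binomial mean `N p₀` at `t = 0` down to the limit `0`. The
equation says `q_{p₀}(t) = N p₀ (α/μ - γ) / (2 α/μ)`, a value strictly between these two bounds,
so it has exactly one solution by the intermediate value theorem.
-/

open Real Finset Filter Topology Set

noncomputable section

def poissonTerm (x : ℝ) (i : ℕ) : ℝ := exp (-x) * x ^ i / i.factorial

def expectedQueue (j : ℕ) (x : ℝ) : ℝ :=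
  ∑ i ∈ range (j + 1), ((j : ℝ) - i) * poissonTerm x i

def meanQueue (N : ℕ) (p x : ℝ) : ℝ :=
  ∑ j ∈ range (N + 1), (N.choose j : ℝ) * p ^ j * (1 - p) ^ (N - j) * expectedQueue j x

end

lemma hasDerivAt_poissonTerm_zero (x : ℝ) :
    HasDerivAt (poissonTerm · 0) (-poissonTerm x 0) x := by
  simpa [poissonTerm] using (hasDerivAt_neg x).exp

lemma hasDerivAt_poissonTerm_succ (i : ℕ) (x : ℝ) :
    HasDerivAt (poissonTerm · (i + 1)) (poissonTerm x i - poissonTerm x (i + 1)) x := by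
  have h := (((hasDerivAt_neg x).exp).fun_mul ((hasDerivAt_id' x).fun_pow (i + 1))).div_const
    ((i + 1).factorial : ℝ)
  refine h.congr_deriv ?_
  simp only [poissonTerm, Nat.factorial_succ, Nat.cast_mul, Nat.add_sub_cancel, pow_succ]
  field_simp
  push_cast
  ring

lemma hasDerivAt_sum_poissonTerm (j : ℕ) (x : ℝ) :
    HasDerivAt (fun y => ∑ i ∈ range (j + 1), poissonTerm y i) (-poissonTerm x j) x := by
  induction j with
  | zero => simpa using hasDerivAt_poissonTerm_zero x
  | succ k ih =>
    simp only [sum_range_succ _ (k + 1)]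
    exact (ih.add (hasDerivAt_poissonTerm_succ k x)).congr_deriv (by ring)

lemma expectedQueue_succ (j : ℕ) (x : ℝ) :
    expectedQueue (j + 1) x = expectedQueue j x + ∑ i ∈ range (j + 1), poissonTerm x i := by
  rw [expectedQueue, sum_range_succ, expectedQueue, ← sum_add_distrib]
  push_cast
  rw [sub_self, zero_mul, add_zero]
  exact sum_congr rfl fun i _ => by ring

lemma hasDerivAt_expectedQueue (j : ℕ) (x : ℝ) :
    HasDerivAt (expectedQueue j) (-∑ i ∈ range j, poissonTerm x i) x := by
  induction j with
  | zero =>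
    have h0 : expectedQueue 0 = fun _ => 0 := funext fun y => by simp [expectedQueue]
    simpa [h0] using hasDerivAt_const x (0 : ℝ)
  | succ k ih =>
    simp only [funext (expectedQueue_succ k)]
    exact (ih.add (hasDerivAt_sum_poissonTerm k x)).congr_deriv (by rw [sum_range_succ]; ring)

lemma expectedQueue_zero_right (j : ℕ) : expectedQueue j 0 = j := by
  rw [expectedQueue, sum_eq_single 0]
  · simp [poissonTerm]
  · intro i _ hi
    simp [poissonTerm, zero_pow hi]
  · simp

lemma tendsto_poissonTerm_atTop (i : ℕ) : Tendsto (poissonTerm · i) atTop (𝓝 0) := by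
  have h := (tendsto_pow_mul_exp_neg_atTop_nhds_zero i).div_const (i.factorial : ℝ)
  rw [zero_div] at h
  exact h.congr fun x => by rw [poissonTerm, mul_comm]

lemma tendsto_expectedQueue_atTop (j : ℕ) : Tendsto (expectedQueue j) atTop (𝓝 0) := by
  have h := tendsto_finsetSum (range (j + 1))
    fun i _ => (tendsto_poissonTerm_atTop i).const_mul ((j : ℝ) - i)
  simp only [mul_zero, sum_const_zero] at h
  exact h

lemma sum_choose_mul_pow_mul_pow_mul_self (N : ℕ) (p : ℝ) :
    ∑ j ∈ range (N + 1), (N.choose j : ℝ) * p ^ j * (1 - p) ^ (N - j) * j = N * p := by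
  have h := congrArg (Polynomial.eval p) (bernsteinPolynomial.sum_smul ℝ N)
  simp only [Polynomial.eval_finsetSum, Polynomial.eval_natCast,
    bernsteinPolynomial, Polynomial.eval_mul, Polynomial.eval_pow, Polynomial.eval_sub,
    Polynomial.eval_one, Polynomial.eval_X, nsmul_eq_mul] at h
  rw [← h]
  exact sum_congr rfl fun j _ => by ring

lemma meanQueue_zero_right (N : ℕ) (p : ℝ) : meanQueue N p 0 = N * p := by
  simp only [meanQueue, expectedQueue_zero_right]
  exact sum_choose_mul_pow_mul_pow_mul_self N p

lemma tendsto_meanQueue_atTop (N : ℕ) (p : ℝ) : Tendsto (meanQueue N p) atTop (𝓝 0) := by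
  have h := tendsto_finsetSum (range (N + 1))
    fun j _ => (tendsto_expectedQueue_atTop j).const_mul ((N.choose j : ℝ) * p ^ j * (1 - p) ^ (N - j))
  simp only [mul_zero, sum_const_zero] at h
  exact h

lemma hasDerivAt_meanQueue (N : ℕ) (p x : ℝ) :
    HasDerivAt (meanQueue N p)
      (-∑ j ∈ range (N + 1), (N.choose j : ℝ) * p ^ j * (1 - p) ^ (N - j) *
        ∑ i ∈ range j, poissonTerm x i) x := by
  have h := HasDerivAt.fun_sum (u := range (N + 1))
    fun j _ => (hasDerivAt_expectedQueue j x).const_mul ((N.choose j : ℝ) * p ^ j * (1 - p) ^ (N - j))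
  simp only [mul_neg, sum_neg_distrib] at h
  exact h

lemma continuous_meanQueue (N : ℕ) (p : ℝ) : Continuous (meanQueue N p) :=
  continuous_iff_continuousAt.2 fun x => (hasDerivAt_meanQueue N p x).continuousAt

lemma strictAntiOn_meanQueue {N : ℕ} (hN : 1 ≤ N) {p : ℝ} (hp0 : 0 < p) (hp1 : p ≤ 1) :
    StrictAntiOn (meanQueue N p) (Ici 0) := by
  refine strictAntiOn_of_deriv_neg (convex_Ici 0) (continuous_meanQueue N p).continuousOn ?_
  intro x hx
  rw [interior_Ici, Set.mem_Ioi] at hx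
  have hterm : ∀ i, 0 < poissonTerm x i := fun i => by unfold poissonTerm; positivity
  rw [(hasDerivAt_meanQueue N p x).deriv, neg_neg_iff_pos]
  refine sum_pos' (fun j _ => ?_) ⟨N, self_mem_range_succ N, ?_⟩
  · have : 0 ≤ (1 - p) ^ (N - j) := pow_nonneg (sub_nonneg.2 hp1) _
    exact mul_nonneg (by positivity) (sum_nonneg fun i _ => (hterm i).le)
  · simpa using mul_pos (pow_pos hp0 N) (sum_pos (fun i _ => hterm i) (nonempty_range_iff.2 (by omega)))

lemma existsUnique_pos_eq_of_strictAntiOn {f : ℝ → ℝ} (hcont : ContinuousOn f (Ici 0))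
    (hanti : StrictAntiOn f (Ici 0)) {L y : ℝ} (hlim : Tendsto f atTop (𝓝 L)) (hLy : L < y)
    (hy : y < f 0) : ∃! t, 0 < t ∧ f t = y := by
  obtain ⟨T, hTy, hT⟩ := ((hlim.eventually_lt_const hLy).and (eventually_gt_atTop 0)).exists
  obtain ⟨t, ht, hft⟩ := intermediate_value_Ioo' hT.le (hcont.mono Icc_subset_Ici_self) ⟨hTy, hy⟩
  refine ⟨t, ⟨ht.1, hft⟩, fun s ⟨hs, hfs⟩ => ?_⟩
  exact hanti.injOn (mem_Ici.2 hs.le) (mem_Ici.2 ht.1.le) (hfs.trans hft.symm)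

theorem stmt_14_general (N : ℕ) (hN : 1 ≤ N) (α γ μ : ℝ)
    (hγ : 0 < γ) (hμ : 0 < μ) (h : α/μ > γ)
    (p₀ : ℝ) (hp₀ : p₀ = γ / (γ + α/μ))
    (q : ℝ → ℝ)
    (hq : ∀ t : ℝ, q t = ∑ j ∈ Finset.range (N+1),
      (N.choose j : ℝ) * p₀^j * (1-p₀)^(N-j) *
        ∑ i ∈ Finset.range (j+1),
          ((j:ℝ) - (i:ℝ)) * (Real.exp (-μ*t) * (μ*t)^i / (Nat.factorial i))) :
    ∃! t : ℝ, 0 < t ∧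
      (N * p₀ / 2) * (γ + α/μ) = N * p₀ * γ + (α/μ) * q t := by
  set r := α / μ
  have hr : 0 < r := hγ.trans h
  have hp₀pos : 0 < p₀ := hp₀ ▸ by positivity
  have hp₀lt : p₀ < 1 := by rw [hp₀, div_lt_one (by positivity)]; linarith
  have hqμ : q = fun t => meanQueue N p₀ (μ * t) := funext fun t => by
    simp only [hq, neg_mul]; rfl
  have hNp₀ : 0 < (N : ℝ) * p₀ := mul_pos (by exact_mod_cast hN) hp₀pos
  have hunique : ∃! t, 0 < t ∧ q t = N * p₀ * (r - γ) / (2 * r) := by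
    rw [hqμ]
    refine existsUnique_pos_eq_of_strictAntiOn
      ((continuous_meanQueue N p₀).comp (continuous_const_mul μ)).continuousOn
      (fun a ha b hb hab => strictAntiOn_meanQueue hN hp₀pos hp₀lt.le
        (mul_nonneg hμ.le ha) (mul_nonneg hμ.le hb) (mul_lt_mul_of_pos_left hab hμ))
      ((tendsto_meanQueue_atTop N p₀).comp (tendsto_id.const_mul_atTop hμ))
      (by apply div_pos <;> nlinarith) ?_
    rw [Function.comp_apply, mul_zero, meanQueue_zero_right, div_lt_iff₀ (by positivity)]
    nlinarith
  refine (existsUnique_congr fun t => and_congr_right fun _ => ?_).1 hunique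
  rw [eq_div_iff (by positivity)]
  constructor <;> intro h' <;> linarith

theorem stmt_14 (N : ℕ) (hN : 1 ≤ N) (α γ μ : ℝ)
    (hα : 0 < α) (hγ : 0 < γ) (hμ : 0 < μ) (h : α/μ > γ)
    (p₀ : ℝ) (hp₀ : p₀ = γ / (γ + α/μ))
    (q : ℝ → ℝ)
    (hq : ∀ t : ℝ, q t = ∑ j ∈ Finset.range (N+1),
      (N.choose j : ℝ) * p₀^j * (1-p₀)^(N-j) *
        ∑ i ∈ Finset.range (j+1),
          ((j:ℝ) - (i:ℝ)) * (Real.exp (-μ*t) * (μ*t)^i / (Nat.factorial i))) :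
    ∃! t : ℝ, 0 < t ∧
      (N * p₀ / 2) * (γ + α/μ) = N * p₀ * γ + (α/μ) * q t :=
  stmt_14_general N hN α γ μ hγ hμ h p₀ hp₀ q hq
end

section
/- Let μ > 0 and T = 1. Define t* = (1/μ)·log((1 + √(1 + 4e^{μ}))/2) if this quantity is ≤ 1, and t* = 1 otherwise. Then t* minimizes over t ∈ [0, 1] the function Φ(t) = e^{−μt} + e^{−μ}(1 + μ − μt + e^{μt}), which is the total expected waiting (in units of α/μ·μ = α) for three customers scheduled at times 0, t, 1 with exponential(μ) services. -/
/-!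
With `x = e^{μt} ∈ [1, e^μ]` and `E = e^μ`, the cost is `(1 + μ)/E + g(x)` where
`g(x) = 1/x + (x - log x)/E`. The bound `log (y/x) ≤ y/x - 1` gives the tangent-type estimate
`g y - g x ≥ (y - x) (y (x - 1) - E) / (E x y)`, whose right side has the sign of
`(y - x)(y (x - 1) - E)`. At the positive root `c` of `x (x - 1) = E` this factor is
`(c - 1)(y - c)² ≥ 0`, so `c` minimizes `g`; when `c > E` (which forces `E ≤ 2`) both factors are
nonpositive for `y ≤ E`, so the endpoint `x = E`, i.e. `t = 1`, minimizes `g` on `(0, E]`.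
-/

open Real Set

namespace SchedulingCost

noncomputable def reducedCost (E x : ℝ) : ℝ := x⁻¹ + (x - log x) / E

noncomputable def posRoot (E : ℝ) : ℝ := (1 + √(1 + 4 * E)) / 2

theorem posRoot_mul_sub_one {E : ℝ} (hE : 0 ≤ E) : posRoot E * (posRoot E - 1) = E := by
  have hsq : √(1 + 4 * E) ^ 2 = 1 + 4 * E := sq_sqrt (by linarith)
  unfold posRoot
  linear_combination hsq / 4

theorem one_le_posRoot {E : ℝ} (hE : 0 ≤ E) : 1 ≤ posRoot E := by
  have : 1 ≤ √(1 + 4 * E) := one_le_sqrt.mpr (by linarith)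
  unfold posRoot
  linarith

theorem le_two_of_lt_posRoot {E : ℝ} (hE : 1 ≤ E) (hlt : E < posRoot E) : E ≤ 2 := by
  have hc := posRoot_mul_sub_one (zero_le_one.trans hE)
  nlinarith

theorem reducedCost_add_le {E x y : ℝ} (hE : 0 < E) (hx : 0 < x) (hy : 0 < y) :
    reducedCost E x + (y - x) * (y * (x - 1) - E) / (E * x * y) ≤ reducedCost E y := by
  have hlog : log y - log x ≤ y / x - 1 := by
    rw [← log_div hy.ne' hx.ne']
    exact log_le_sub_one_of_pos (div_pos hy hx)
  have hgap : reducedCost E y - reducedCost E x - (y - x) * (y * (x - 1) - E) / (E * x * y)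
      = (y / x - 1 - (log y - log x)) / E := by
    unfold reducedCost
    field_simp
    ring
  have : 0 ≤ (y / x - 1 - (log y - log x)) / E := div_nonneg (by linarith) hE.le
  linarith

theorem reducedCost_le_of_nonneg {E x y : ℝ} (hE : 0 < E) (hx : 0 < x) (hy : 0 < y)
    (h : 0 ≤ (y - x) * (y * (x - 1) - E)) : reducedCost E x ≤ reducedCost E y := by
  have : 0 ≤ (y - x) * (y * (x - 1) - E) / (E * x * y) := by positivity
  linarith [reducedCost_add_le hE hx hy]

theorem reducedCost_posRoot_le {E y : ℝ} (hE : 0 < E) (hy : 0 < y) :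
    reducedCost E (posRoot E) ≤ reducedCost E y := by
  have hc := posRoot_mul_sub_one hE.le
  have hc1 := one_le_posRoot hE.le
  apply reducedCost_le_of_nonneg hE (by linarith) hy
  have : (y - posRoot E) * (y * (posRoot E - 1) - E) = (posRoot E - 1) * (y - posRoot E) ^ 2 := by
    linear_combination (y - posRoot E) * hc
  rw [this]
  positivity

theorem reducedCost_self_le {E y : ℝ} (hE1 : 1 ≤ E) (hE2 : E ≤ 2) (hy : 0 < y) (hyE : y ≤ E) :
    reducedCost E E ≤ reducedCost E y := by
  apply reducedCost_le_of_nonneg (by linarith) (by linarith) hy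
  have : y * (E - 1) ≤ E * (E - 1) := mul_le_mul_of_nonneg_right hyE (by linarith)
  exact mul_nonneg_of_nonpos_of_nonpos (by linarith) (by nlinarith)

theorem cost_eq_reducedCost (μ t : ℝ) :
    exp (-μ * t) + exp (-μ) * (1 + μ - μ * t + exp (μ * t))
      = (1 + μ) / exp μ + reducedCost (exp μ) (exp (μ * t)) := by
  rw [reducedCost, log_exp, neg_mul, exp_neg, exp_neg]
  field_simp
  ring

end SchedulingCost

open SchedulingCost in
theorem stmt_17 (μ : ℝ) (hμ : 0 < μ) (tstar : ℝ)
    (htstar : tstar =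
      if (1/μ) * Real.log ((1 + Real.sqrt (1 + 4 * Real.exp μ)) / 2) ≤ 1
      then (1/μ) * Real.log ((1 + Real.sqrt (1 + 4 * Real.exp μ)) / 2)
      else 1) :
    tstar ∈ Set.Icc (0:ℝ) 1 ∧
      ∀ t ∈ Set.Icc (0:ℝ) 1,
        Real.exp (-μ*tstar) + Real.exp (-μ) * (1 + μ - μ*tstar + Real.exp (μ*tstar))
          ≤ Real.exp (-μ*t) + Real.exp (-μ) * (1 + μ - μ*t + Real.exp (μ*t)) := by
  set E := exp μ with hE
  have hE1 : 1 ≤ E := one_le_exp hμ.le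
  have hc1 := one_le_posRoot (zero_le_one.trans hE1)
  have hcancel : μ * ((1 / μ) * log (posRoot E)) = log (posRoot E) := by field_simp
  change tstar = if (1 / μ) * log (posRoot E) ≤ 1 then (1 / μ) * log (posRoot E) else 1 at htstar
  have hmin : ∀ t ∈ Icc (0 : ℝ) 1, reducedCost E (exp (μ * tstar)) ≤ reducedCost E (exp (μ * t)) := by
    intro t ht
    have hyE : exp (μ * t) ≤ E := exp_le_exp.mpr (by nlinarith [ht.2])
    split_ifs at htstar with h
    · rw [htstar, hcancel, exp_log (by linarith)]
      exact reducedCost_posRoot_le (by linarith) (exp_pos _)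
    · have hlt : E < posRoot E := by
        rw [← exp_log (zero_lt_one.trans_le hc1), hE, exp_lt_exp, ← hcancel]
        nlinarith
      rw [htstar, mul_one]
      exact reducedCost_self_le hE1 (le_two_of_lt_posRoot hE1 hlt) (exp_pos _) hyE
  refine ⟨?_, fun t ht => ?_⟩
  · split_ifs at htstar with h
    · rw [htstar]
      exact ⟨mul_nonneg (by positivity) (log_nonneg hc1), h⟩
    · rw [htstar]
      exact ⟨zero_le_one, le_rfl⟩
  · rw [cost_eq_reducedCost, cost_eq_reducedCost]
    linarith [hmin t ht]
end
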